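/- In the Galerkin setting below, if the operator T̃ : V → V is invertible (equivalently, the matrix M⁻¹A is invertible), then cond(M)^{−1/2} · ‖T̃⁻¹‖ ≤ ‖(M⁻¹ A)⁻¹‖₂ ≤ cond(M)^{1/2} · ‖T̃⁻¹‖. -/

import Mathlib

/-- The matrix operator norm induced by the Euclidean norm. -/
noncomputable def matNorm {n : ℕ} (B : Matrix (Fin n) (Fin n) ℂ) : ℝ :=
  ‖(Matrix.toEuclideanCLM (𝕜 := ℂ) B : EuclideanSpace ℂ (Fin n) →L[ℂ] EuclideanSpace ℂ (Fin n))‖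

/-- The Galerkin truncation `T̃ := (P ∘ T)|_V : V → V`, where `V = span{φ_1,…,φ_n}` and
`P` is the orthogonal projection onto `V`. -/
noncomputable def galerkinTrunc {H : Type*} [NormedAddCommGroup H] [InnerProductSpace ℂ H]
    {n : ℕ} (T : H →L[ℂ] H) (φ : Fin n → H) :
    Submodule.span ℂ (Set.range φ) →L[ℂ] Submodule.span ℂ (Set.range φ) :=
  haveI : FiniteDimensional ℂ (Submodule.span ℂ (Set.range φ)) :=
    FiniteDimensional.span_of_finite ℂ (Set.finite_range φ)
  ((Submodule.span ℂ (Set.range φ)).orthogonalProjection).comp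
    (T.comp (Submodule.span ℂ (Set.range φ)).subtypeL)

/-!
In the coordinates `x ↦ ∑ xᵢ φᵢ` the operator `T̃` has matrix `M⁻¹ A`, so `(M⁻¹ A)⁻¹` is `T̃⁻¹`
conjugated by the coordinate isomorphism `ℂⁿ ≃ V`. Since `‖∑ xᵢ φᵢ‖² = ⟪x, M x⟫`, this isomorphism
has norm at most `√‖M‖` and its inverse norm at most `√‖M⁻¹‖`; submultiplicativity of the operator
norm, applied to the conjugation in both directions, gives the two bounds.
-/

open Matrix
open scoped InnerProductSpace

lemma le_sqrt_mul_of_sq_le_mul_sq {a b c : ℝ} (hb : 0 ≤ b) (h : a ^ 2 ≤ c * b ^ 2) :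
    a ≤ √c * b := by
  rw [← Real.sqrt_sq hb, ← Real.sqrt_mul' c (sq_nonneg b)]
  exact (le_abs_self a).trans (Real.abs_le_sqrt h)

section Gram

variable {𝕜 E ι : Type*} [RCLike 𝕜] [NormedAddCommGroup E] [InnerProductSpace 𝕜 E] [Fintype ι]
  [DecidableEq ι]

lemma inner_sum_smul_eq_inner_toEuclideanCLM_gram (v : ι → E) (x y : EuclideanSpace 𝕜 ι) :
    ⟪∑ i, x i • v i, ∑ i, y i • v i⟫_𝕜 = ⟪x, toEuclideanCLM (𝕜 := 𝕜) (gram 𝕜 v) y⟫_𝕜 := by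
  rw [← star_dotProduct_gram_mulVec, EuclideanSpace.inner_eq_star_dotProduct, dotProduct_comm]
  rfl

lemma norm_sum_smul_le_sqrt_norm_gram_mul (v : ι → E) (x : EuclideanSpace 𝕜 ι) :
    ‖∑ i, x i • v i‖ ≤ √‖toEuclideanCLM (𝕜 := 𝕜) (gram 𝕜 v)‖ * ‖x‖ := by
  refine le_sqrt_mul_of_sq_le_mul_sq (norm_nonneg x) ?_
  calc ‖∑ i, x i • v i‖ ^ 2 = RCLike.re ⟪x, toEuclideanCLM (𝕜 := 𝕜) (gram 𝕜 v) x⟫_𝕜 := by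
        rw [← inner_sum_smul_eq_inner_toEuclideanCLM_gram, norm_sq_eq_re_inner (𝕜 := 𝕜)]
    _ ≤ ‖x‖ * (‖toEuclideanCLM (𝕜 := 𝕜) (gram 𝕜 v)‖ * ‖x‖) :=
        (re_inner_le_norm _ _).trans (by gcongr; exact ContinuousLinearMap.le_opNorm _ _)
    _ = ‖toEuclideanCLM (𝕜 := 𝕜) (gram 𝕜 v)‖ * ‖x‖ ^ 2 := by ring

lemma norm_le_sqrt_norm_gram_inv_mul {v : ι → E} (hv : LinearIndependent 𝕜 v)
    (x : EuclideanSpace 𝕜 ι) :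
    ‖x‖ ≤ √‖toEuclideanCLM (𝕜 := 𝕜) (gram 𝕜 v)⁻¹‖ * ‖∑ i, x i • v i‖ := by
  set M := gram 𝕜 v
  set c := ‖toEuclideanCLM (𝕜 := 𝕜) M⁻¹‖
  set u := toEuclideanCLM (𝕜 := 𝕜) M⁻¹ x
  have hMu : toEuclideanCLM (𝕜 := 𝕜) M u = x := by
    have hdet : IsUnit M.det := (det_gram_ne_zero_iff_linearIndependent.mpr hv).isUnit
    rw [← mul_apply_eq_comp, ← map_mul, mul_nonsing_inv M hdet, map_one, one_apply_eq_self]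
  have hu : ‖∑ i, u i • v i‖ ≤ √c * ‖x‖ := by
    refine le_sqrt_mul_of_sq_le_mul_sq (norm_nonneg x) ?_
    calc ‖∑ i, u i • v i‖ ^ 2 = RCLike.re ⟪u, x⟫_𝕜 := by
          rw [← hMu, ← inner_sum_smul_eq_inner_toEuclideanCLM_gram,
            norm_sq_eq_re_inner (𝕜 := 𝕜)]
      _ ≤ c * ‖x‖ * ‖x‖ :=
          (re_inner_le_norm _ _).trans (by gcongr; exact ContinuousLinearMap.le_opNorm _ _)
      _ = c * ‖x‖ ^ 2 := by ring
  -- Cauchy–Schwarz, since `u = M⁻¹ x` makes `⟪∑ xᵢ vᵢ, ∑ uᵢ vᵢ⟫ = ‖x‖ ^ 2`.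
  have hx : ‖x‖ ^ 2 ≤ ‖∑ i, x i • v i‖ * ‖∑ i, u i • v i‖ := by
    rw [norm_sq_eq_re_inner (𝕜 := 𝕜), ← hMu, ← inner_sum_smul_eq_inner_toEuclideanCLM_gram]
    exact re_inner_le_norm _ _
  rcases (norm_nonneg x).eq_or_lt with h0 | h0
  · rw [← h0]
    positivity
  · refine le_of_mul_le_mul_right ?_ h0
    calc ‖x‖ * ‖x‖ = ‖x‖ ^ 2 := (sq _).symm
      _ ≤ ‖∑ i, x i • v i‖ * (√c * ‖x‖) := hx.trans (by gcongr)
      _ = √c * ‖∑ i, x i • v i‖ * ‖x‖ := by ring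

end Gram

lemma ContinuousLinearEquiv.norm_conj_le {𝕜 E F : Type*} [NontriviallyNormedField 𝕜]
    [SeminormedAddCommGroup E] [SeminormedAddCommGroup F] [NormedSpace 𝕜 E] [NormedSpace 𝕜 F]
    (e : E ≃L[𝕜] F) (f : E →L[𝕜] E) :
    ‖(e : E →L[𝕜] F) ∘L f ∘L (e.symm : F →L[𝕜] E)‖ ≤
      ‖(e : E →L[𝕜] F)‖ * ‖f‖ * ‖(e.symm : F →L[𝕜] E)‖ :=
  (ContinuousLinearMap.opNorm_comp_le _ _).trans <| by
    rw [mul_assoc]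
    gcongr
    exact ContinuousLinearMap.opNorm_comp_le _ _

namespace Module.Basis

variable {𝕜 E ι : Type*} [RCLike 𝕜] [NormedAddCommGroup E] [InnerProductSpace 𝕜 E] [Fintype ι]
  (b : Basis ι 𝕜 E)

noncomputable def equivEuclidean : E ≃L[𝕜] EuclideanSpace 𝕜 ι :=
  b.equivFunL.trans (EuclideanSpace.equiv ι 𝕜).symm

lemma equivEuclidean_symm_apply (x : EuclideanSpace 𝕜 ι) :
    b.equivEuclidean.symm x = ∑ i, x i • b i :=
  b.equivFun_symm_apply x

variable [DecidableEq ι]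

lemma norm_equivEuclidean_symm_le :
    ‖(b.equivEuclidean.symm : EuclideanSpace 𝕜 ι →L[𝕜] E)‖ ≤
      √‖toEuclideanCLM (𝕜 := 𝕜) (gram 𝕜 b)‖ :=
  ContinuousLinearMap.opNorm_le_bound _ (Real.sqrt_nonneg _) fun x => by
    simpa only [ContinuousLinearEquiv.coe_coe, equivEuclidean_symm_apply] using
      norm_sum_smul_le_sqrt_norm_gram_mul b x

lemma norm_equivEuclidean_le :
    ‖(b.equivEuclidean : E →L[𝕜] EuclideanSpace 𝕜 ι)‖ ≤
      √‖toEuclideanCLM (𝕜 := 𝕜) (gram 𝕜 b)⁻¹‖ :=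
  ContinuousLinearMap.opNorm_le_bound _ (Real.sqrt_nonneg _) fun y => by
    simpa only [← equivEuclidean_symm_apply, ContinuousLinearEquiv.symm_apply_apply,
      ContinuousLinearEquiv.coe_coe] using
      norm_le_sqrt_norm_gram_inv_mul b.linearIndependent (b.equivEuclidean y)

lemma toEuclideanCLM_toMatrix (f : E →L[𝕜] E) :
    toEuclideanCLM (𝕜 := 𝕜) (LinearMap.toMatrix b b f) =
      (b.equivEuclidean : E →L[𝕜] EuclideanSpace 𝕜 ι) ∘L f ∘L
        (b.equivEuclidean.symm : EuclideanSpace 𝕜 ι →L[𝕜] E) := by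
  ext1 x
  have hx : WithLp.ofLp x = b.repr (b.equivEuclidean.symm x) :=
    (b.equivFun.apply_symm_apply (WithLp.ofLp x)).symm
  apply WithLp.ofLp_injective
  rw [ofLp_toEuclideanCLM, hx, LinearMap.toMatrix_mulVec_repr]
  rfl

lemma norm_toEuclideanCLM_toMatrix_le (f : E →L[𝕜] E) :
    ‖toEuclideanCLM (𝕜 := 𝕜) (LinearMap.toMatrix b b f)‖ ≤
      √‖toEuclideanCLM (𝕜 := 𝕜) (gram 𝕜 b)⁻¹‖ * ‖f‖ *
        √‖toEuclideanCLM (𝕜 := 𝕜) (gram 𝕜 b)‖ := by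
  rw [toEuclideanCLM_toMatrix]
  refine (b.equivEuclidean.norm_conj_le f).trans ?_
  gcongr
  exacts [b.norm_equivEuclidean_le, b.norm_equivEuclidean_symm_le]

lemma norm_le_norm_toEuclideanCLM_toMatrix (f : E →L[𝕜] E) :
    ‖f‖ ≤ √‖toEuclideanCLM (𝕜 := 𝕜) (gram 𝕜 b)‖ *
      ‖toEuclideanCLM (𝕜 := 𝕜) (LinearMap.toMatrix b b f)‖ *
        √‖toEuclideanCLM (𝕜 := 𝕜) (gram 𝕜 b)⁻¹‖ := by
  have hf : f = (b.equivEuclidean.symm : EuclideanSpace 𝕜 ι →L[𝕜] E) ∘L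
      toEuclideanCLM (𝕜 := 𝕜) (LinearMap.toMatrix b b f) ∘L
        (b.equivEuclidean.symm.symm : E →L[𝕜] EuclideanSpace 𝕜 ι) := by
    rw [toEuclideanCLM_toMatrix]
    ext
    simp
  conv_lhs => rw [hf]
  refine (b.equivEuclidean.symm.norm_conj_le _).trans ?_
  gcongr
  exacts [b.norm_equivEuclidean_symm_le, b.norm_equivEuclidean_le]

lemma gram_mul_toMatrix (f : E →ₗ[𝕜] E) :
    gram 𝕜 b * LinearMap.toMatrix b b f = of fun i j => ⟪b i, f (b j)⟫_𝕜 := by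
  ext i j
  conv_rhs => rw [of_apply, ← b.sum_repr (f (b j)), inner_sum]
  simp only [mul_apply, gram_apply, LinearMap.toMatrix_apply, inner_smul_right, mul_comm]

end Module.Basis

section Galerkin

variable {H : Type*} [NormedAddCommGroup H] [InnerProductSpace ℂ H] {n : ℕ} {φ : Fin n → H}

lemma gram_basisSpan (hφ : LinearIndependent ℂ φ) :
    gram ℂ (Module.Basis.span hφ) = gram ℂ φ := by
  ext i j
  simp only [gram_apply, Submodule.coe_inner, Module.Basis.span_apply]

lemma inner_galerkinTrunc (T : H →L[ℂ] H) (v w : Submodule.span ℂ (Set.range φ)) :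
    ⟪v, galerkinTrunc T φ w⟫_ℂ = ⟪(v : H), T w⟫_ℂ := by
  have : FiniteDimensional ℂ (Submodule.span ℂ (Set.range φ)) :=
    FiniteDimensional.span_of_finite ℂ (Set.finite_range φ)
  exact Submodule.inner_orthogonalProjectionOnto_eq_of_mem_left _ _

lemma toMatrix_galerkinTrunc (T : H →L[ℂ] H) (hφ : LinearIndependent ℂ φ) :
    LinearMap.toMatrix (Module.Basis.span hφ) (Module.Basis.span hφ) (galerkinTrunc T φ) =
      (gram ℂ φ)⁻¹ * of fun i j => ⟪φ i, T (φ j)⟫_ℂ := by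
  set b := Module.Basis.span hφ
  have hdet : IsUnit (gram ℂ φ).det := (det_gram_ne_zero_iff_linearIndependent.mpr hφ).isUnit
  have hgalerkin : gram ℂ φ * LinearMap.toMatrix b b (galerkinTrunc T φ) =
      of fun i j => ⟪φ i, T (φ j)⟫_ℂ := by
    ext i j
    rw [← gram_basisSpan hφ, b.gram_mul_toMatrix, of_apply, of_apply,
      ContinuousLinearMap.coe_coe, inner_galerkinTrunc, Module.Basis.span_apply,
      Module.Basis.span_apply]
  rw [← hgalerkin, ← Matrix.mul_assoc, nonsing_inv_mul _ hdet, Matrix.one_mul]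

end Galerkin

theorem galerkin_matrix_inverse_norm_two_sided_bound_general
    {H : Type*} [NormedAddCommGroup H] [InnerProductSpace ℂ H]
    {n : ℕ} (T : H →L[ℂ] H) (φ : Fin n → H) (hφ : LinearIndependent ℂ φ)
    -- the mass (Gram) matrix `M` and the Galerkin matrix `A`
    (M A : Matrix (Fin n) (Fin n) ℂ)
    (hM : ∀ i j, M i j = (inner ℂ (φ i) (φ j) : ℂ))
    (hA : ∀ i j, A i j = (inner ℂ (φ i) (T (φ j)) : ℂ))
    -- `T̃ : V → V` is invertible, with (continuous) inverse `Tinv`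
    (Tinv : Submodule.span ℂ (Set.range φ) →L[ℂ] Submodule.span ℂ (Set.range φ))
    (hTinv₁ : galerkinTrunc T φ * Tinv = 1) :
    (Real.sqrt (matNorm M * matNorm M⁻¹))⁻¹ * ‖Tinv‖ ≤ matNorm (M⁻¹ * A)⁻¹ ∧
    matNorm (M⁻¹ * A)⁻¹ ≤ Real.sqrt (matNorm M * matNorm M⁻¹) * ‖Tinv‖ := by
  have hM' : gram ℂ φ = M := Matrix.ext fun i j => (hM i j).symm
  have hA' : (of fun i j => ⟪φ i, T (φ j)⟫_ℂ) = A := Matrix.ext fun i j => (hA i j).symm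
  set b := Module.Basis.span hφ
  have hinv : (M⁻¹ * A)⁻¹ = LinearMap.toMatrix b b Tinv := by
    refine inv_eq_right_inv ?_
    rw [← hM', ← hA', ← toMatrix_galerkinTrunc T hφ, ← LinearMap.toMatrix_mul,
      ← ContinuousLinearMap.toLinearMap_mul, hTinv₁, ContinuousLinearMap.toLinearMap_one,
      LinearMap.toMatrix_one]
  have hupper := b.norm_toEuclideanCLM_toMatrix_le Tinv
  have hlower := b.norm_le_norm_toEuclideanCLM_toMatrix Tinv
  rw [gram_basisSpan, hM', ← hinv] at hupper hlower
  unfold matNorm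
  rw [Real.sqrt_mul (norm_nonneg _)]
  constructor
  · refine inv_mul_le_of_le_mul₀ (by positivity) (norm_nonneg _) (hlower.trans_eq ?_)
    ring
  · exact hupper.trans_eq (by ring)

theorem galerkin_matrix_inverse_norm_two_sided_bound
    {H : Type*} [NormedAddCommGroup H] [InnerProductSpace ℂ H] [CompleteSpace H]
    {n : ℕ} (T : H →L[ℂ] H) (φ : Fin n → H) (hφ : LinearIndependent ℂ φ)
    -- the mass (Gram) matrix `M` and the Galerkin matrix `A`
    (M A : Matrix (Fin n) (Fin n) ℂ)
    (hM : ∀ i j, M i j = (inner ℂ (φ i) (φ j) : ℂ))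
    (hA : ∀ i j, A i j = (inner ℂ (φ i) (T (φ j)) : ℂ))
    -- `T̃ : V → V` is invertible, with (continuous) inverse `Tinv`
    (Tinv : Submodule.span ℂ (Set.range φ) →L[ℂ] Submodule.span ℂ (Set.range φ))
    (hTinv₁ : galerkinTrunc T φ * Tinv = 1) (hTinv₂ : Tinv * galerkinTrunc T φ = 1) :
    (Real.sqrt (matNorm M * matNorm M⁻¹))⁻¹ * ‖Tinv‖ ≤ matNorm (M⁻¹ * A)⁻¹ ∧
    matNorm (M⁻¹ * A)⁻¹ ≤ Real.sqrt (matNorm M * matNorm M⁻¹) * ‖Tinv‖ :=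
  galerkin_matrix_inverse_norm_two_sided_bound_general T φ hφ M A hM hA Tinv hTinv₁
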